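/- arXiv:2502.04035 — 3 statements merged into one kernel-verified Lean document; each statement's English description precedes it below -/
import Mathlib

section
/- Let M = (S, s₀, X, Y, δ, λ) be an FSM with n states whose distinct states are pairwise strongly separable, with witness function ω and state identification sets W(s) as in the context, and let V be a state cover for M. Let M_I = (Q, q₀, X, Y, δ_I, λ_I) be an FSM over the same alphabets, and suppose that for every v ∈ V, writing s = δ(s₀, v) and q = δ_I(q₀, v), we have λ(s, w) ∼ λ_I(q, w) for every w ∈ W(s). Then the map v ↦ δ_I(q₀, v) is injective on V; in particular, the sequences in V reach n distinct states of M_I and M_I has at least n states. -/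
/-- A (deterministic, completely-specified) FSM over input alphabet `X` and
output alphabet `Y`, with state type `S`: an initial state, a total transition
function and a total output function. -/
structure FSM (X Y S : Type) where
  init : S
  tr : S → X → S
  out : S → X → Y

namespace FSM

variable {X Y S : Type}

/-- The transition function extended to input sequences. -/
def trs (M : FSM X Y S) : S → List X → S
  | s, [] => s
  | s, x :: xs => M.trs (M.tr s x) xs

/-- The output function extended to input sequences. -/
def outs (M : FSM X Y S) : S → List X → List Y
  | _, [] => []
  | s, x :: xs => M.out s x :: M.outs (M.tr s x) xs

end FSM

/-- The input sequence `xs` separates state `s` of `M` from state `q` of `M'`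
(w.r.t. the similarity relation `sim`, lifted componentwise to sequences). -/
def Separates {X Y S S' : Type} (sim : Y → Y → Prop) (M : FSM X Y S) (M' : FSM X Y S')
    (s : S) (q : S') (xs : List X) : Prop :=
  ¬ List.Forall₂ sim (M.outs s xs) (M'.outs q xs)

/-- `xs` is a witness that states `s₁`, `s₂` of `M` are strongly separable:
every state `s₃` of every FSM `M'` over the same alphabets is separated by `xs`
from `s₁` or from `s₂`. -/
def StrongWitness {X Y S : Type} (sim : Y → Y → Prop) (M : FSM X Y S)
    (s₁ s₂ : S) (xs : List X) : Prop :=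
  ∀ (S' : Type) [Fintype S'] (M' : FSM X Y S') (s₃ : S'),
    Separates sim M M' s₁ s₃ xs ∨ Separates sim M M' s₂ s₃ xs

/-- `MI` conforms to `M`: on every input sequence the outputs are similar. -/
def Conforms {X Y S Q : Type} (sim : Y → Y → Prop) (MI : FSM X Y Q) (M : FSM X Y S) : Prop :=
  ∀ xs : List X, List.Forall₂ sim (M.outs M.init xs) (MI.outs MI.init xs)

/-- A state cover: a prefix-closed set of input sequences containing, for each
state, exactly one sequence reaching it from the initial state. -/
def StateCover {X Y S : Type} (M : FSM X Y S) (V : Set (List X)) : Prop :=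
  (∀ v ∈ V, ∀ u, u <+: v → u ∈ V) ∧
  ∀ s : S, ∃! v, v ∈ V ∧ M.trs M.init v = s

open Classical in
/-- One step of the product machine `P(M, MI)`; `none` is the error state `e`. -/
noncomputable def prodStep {X Y S Q : Type} (sim : Y → Y → Prop) (M : FSM X Y S)
    (MI : FSM X Y Q) : Option (S × Q) → X → Option (S × Q)
  | none, _ => none
  | some (s, q), x =>
      if sim (M.out s x) (MI.out q x) then some (M.tr s x, MI.tr q x) else none

/-- The transition function of the product machine extended to input sequences. -/
noncomputable def prodTrs {X Y S Q : Type} (sim : Y → Y → Prop) (M : FSM X Y S)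
    (MI : FSM X Y Q) : Option (S × Q) → List X → Option (S × Q)
  | p, [] => p
  | p, x :: xs => prodTrs sim M MI (prodStep sim M MI p x) xs

/-- The set `D_ℓ` of pairs `(v, x̄)` with `v ∈ V`, `|x̄| = ℓ`, and `M ≉_{v·x̄} M_I`. -/
def DSet {X Y S Q : Type} (sim : Y → Y → Prop) (M : FSM X Y S) (MI : FSM X Y Q)
    (V : Set (List X)) (ℓ : ℕ) : Set (List X × List X) :=
  {p | p.1 ∈ V ∧ p.2.length = ℓ ∧
    ¬ List.Forall₂ sim (M.outs M.init (p.1 ++ p.2)) (MI.outs MI.init (p.1 ++ p.2))}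

/-- The set `DW_ℓ` of pairs `(v, x̄)` with `v ∈ V`, `|x̄| = ℓ`, and
`M ≉_{v·x̄·w} M_I` for some `w ∈ W(δ(s₀, v·x̄))`. -/
def DWSet {X Y S Q : Type} (sim : Y → Y → Prop) (M : FSM X Y S) (MI : FSM X Y Q)
    (V : Set (List X)) (W : S → Set (List X)) (ℓ : ℕ) : Set (List X × List X) :=
  {p | p.1 ∈ V ∧ p.2.length = ℓ ∧
    ∃ w ∈ W (M.trs M.init (p.1 ++ p.2)),
      ¬ List.Forall₂ sim (M.outs M.init (p.1 ++ p.2 ++ w))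
          (MI.outs MI.init (p.1 ++ p.2 ++ w))}


lemma forall2_prefix_outs {X Y S Q : Type} (sim : Y → Y → Prop) (M : FSM X Y S)
    (MI : FSM X Y Q) : ∀ (xs t : List X) (s : S) (q : Q),
    List.Forall₂ sim (M.outs s (xs ++ t)) (MI.outs q (xs ++ t)) →
    List.Forall₂ sim (M.outs s xs) (MI.outs q xs) := by
  intro xs
  induction xs with
  | nil => intro t s q _; exact List.Forall₂.nil
  | cons x xs ih =>
    intro t s q h
    simp only [List.cons_append, FSM.outs] at h ⊢
    cases h with
    | cons hy ht => exact List.Forall₂.cons hy (ih t _ _ ht)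

/-- if the states reached by the state cover `V` pass their state
identification sets, then `v ↦ δ_I(q₀, v)` is injective on `V`; in particular
`V` reaches `n` distinct states of `M_I` and `M_I` has at least `n` states. -/
theorem stateCover_reaches_distinct_states {X Y S Q : Type} [Fintype X] [Fintype S] [Fintype Q]
    (sim : Y → Y → Prop) (M : FSM X Y S) (MI : FSM X Y Q) (n : ℕ)
    (hn : Fintype.card S = n)
    (ω : S → S → List X)
    (hω : ∀ s₁ s₂ : S, s₁ ≠ s₂ →
      ω s₁ s₂ = ω s₂ s₁ ∧ StrongWitness sim M s₁ s₂ (ω s₁ s₂))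
    (W : S → Set (List X))
    (hW : ∀ s₁ s₂ : S, s₁ ≠ s₂ →
      (∃ w ∈ W s₁, ω s₁ s₂ <+: w) ∧ (∃ w ∈ W s₂, ω s₁ s₂ <+: w))
    (V : Set (List X)) (hV : StateCover M V)
    (hVW : ∀ v ∈ V, ∀ w ∈ W (M.trs M.init v),
      List.Forall₂ sim (M.outs (M.trs M.init v) w) (MI.outs (MI.trs MI.init v) w)) :
    Set.InjOn (fun v => MI.trs MI.init v) V ∧
    ((fun v => MI.trs MI.init v) '' V).ncard = n ∧
    n ≤ Fintype.card Q := by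
  have hinj : Set.InjOn (fun v => MI.trs MI.init v) V := by
    intro v₁ hv₁ v₂ hv₂ heq
    by_contra hne
    set s₁ := M.trs M.init v₁ with hs₁
    set s₂ := M.trs M.init v₂ with hs₂
    by_cases hss : s₁ = s₂
    · obtain ⟨v, _, huniq⟩ := (hV.2 s₁)
      exact hne ((huniq v₁ ⟨hv₁, rfl⟩).trans (huniq v₂ ⟨hv₂, hss.symm⟩).symm)
    · obtain ⟨-, hsw⟩ := hω s₁ s₂ hss
      obtain ⟨⟨w₁, hw₁, hp₁⟩, ⟨w₂, hw₂, hp₂⟩⟩ := hW s₁ s₂ hss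
      rcases hsw Q MI (MI.trs MI.init v₁) with hsep | hsep
      · obtain ⟨t, ht⟩ := hp₁
        exact hsep (forall2_prefix_outs sim M MI _ t _ _
          (ht ▸ hVW v₁ hv₁ w₁ hw₁))
      · obtain ⟨t, ht⟩ := hp₂
        have heq' : MI.trs MI.init v₁ = MI.trs MI.init v₂ := heq
        have := hVW v₂ hv₂ w₂ hw₂
        rw [← heq'] at this
        exact hsep (forall2_prefix_outs sim M MI _ t _ _ (ht ▸ this))
  refine ⟨hinj, ?_, ?_⟩
  · have hMinj : Set.InjOn (fun v => M.trs M.init v) V := by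
      intro v₁ hv₁ v₂ hv₂ heq
      obtain ⟨v, _, huniq⟩ := hV.2 (M.trs M.init v₁)
      exact (huniq v₁ ⟨hv₁, rfl⟩).trans (huniq v₂ ⟨hv₂, heq.symm⟩).symm
    have hMsurj : (fun v => M.trs M.init v) '' V = Set.univ := by
      ext s
      simp only [Set.mem_image, Set.mem_univ, iff_true]
      obtain ⟨v, ⟨hv, hvs⟩, -⟩ := hV.2 s
      exact ⟨v, hv, hvs⟩
    have h1 : ((fun v => MI.trs MI.init v) '' V).ncard = V.ncard :=
      Set.ncard_image_of_injOn hinj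
    have h2 : ((fun v => M.trs M.init v) '' V).ncard = V.ncard :=
      Set.ncard_image_of_injOn hMinj
    rw [hMsurj, Set.ncard_univ, Nat.card_eq_fintype_card, hn] at h2
    rw [h1, h2]
  · have h1 : ((fun v => MI.trs MI.init v) '' V).ncard = V.ncard :=
      Set.ncard_image_of_injOn hinj
    have hMinj : Set.InjOn (fun v => M.trs M.init v) V := by
      intro v₁ hv₁ v₂ hv₂ heq
      obtain ⟨v, _, huniq⟩ := hV.2 (M.trs M.init v₁)
      exact (huniq v₁ ⟨hv₁, rfl⟩).trans (huniq v₂ ⟨hv₂, heq.symm⟩).symm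
    have hMsurj : (fun v => M.trs M.init v) '' V = Set.univ := by
      ext s
      simp only [Set.mem_image, Set.mem_univ, iff_true]
      obtain ⟨v, ⟨hv, hvs⟩, -⟩ := hV.2 s
      exact ⟨v, hv, hvs⟩
    have h2 : ((fun v => M.trs M.init v) '' V).ncard = V.ncard :=
      Set.ncard_image_of_injOn hMinj
    rw [hMsurj, Set.ncard_univ, Nat.card_eq_fintype_card, hn] at h2
    calc n = ((fun v => MI.trs MI.init v) '' V).ncard := by rw [h1, h2]
      _ ≤ (Set.univ : Set Q).ncard :=
          Set.ncard_le_ncard (Set.subset_univ _) Set.finite_univ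
      _ = Fintype.card Q := by rw [Set.ncard_univ, Nat.card_eq_fintype_card]
end

section
/- Let M = (S, s₀, X, Y, δ, λ) be an FSM whose distinct states are pairwise strongly separable, with witness function ω, state identification sets W(s), and state cover V as in the context, and let M_I = (Q, q₀, X, Y, δ_I, λ_I) be an FSM over the same alphabets. Suppose that for all v ∈ V and all w ∈ W(δ(s₀, v)) we have M ≈_{v·w} M_I, that M_I does not conform to M, and that ℓ ≥ 1 is the smallest positive integer such that D_ℓ ∪ DW_ℓ ≠ ∅ (i.e., D_ℓ ∪ DW_ℓ ≠ ∅ and D_{ℓ'} ∪ DW_{ℓ'} = ∅ for all 1 ≤ ℓ' < ℓ). If (v, x̄) ∈ D_ℓ ∪ DW_ℓ and x̄₁ is a nonempty proper prefix of x̄, then the state δ_I(q₀, v·x̄₁) of M_I is different from δ_I(q₀, v') for every v' ∈ V. -/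
namespace FSM
variable {X Y S : Type}

theorem trs_append (M : FSM X Y S) (s : S) (a b : List X) :
    M.trs s (a ++ b) = M.trs (M.trs s a) b := by
  induction a generalizing s with
  | nil => rfl
  | cons x xs ih => simp [trs, ih]

theorem outs_append (M : FSM X Y S) (s : S) (a b : List X) :
    M.outs s (a ++ b) = M.outs s a ++ M.outs (M.trs s a) b := by
  induction a generalizing s with
  | nil => rfl
  | cons x xs ih => simp [outs, trs, ih]

theorem outs_length (M : FSM X Y S) (s : S) (a : List X) :
    (M.outs s a).length = a.length := by
  induction a generalizing s <;> simp [outs, *]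

end FSM

theorem forall₂_append_split {α β : Type*} {R : α → β → Prop} {a b : List α} {c d : List β}
    (h : List.Forall₂ R (a ++ b) (c ++ d)) (hl : a.length = c.length) :
    List.Forall₂ R a c ∧ List.Forall₂ R b d := by
  induction a generalizing c with
  | nil =>
    cases c with
    | nil => exact ⟨.nil, h⟩
    | cons y ys => simp at hl
  | cons x xs ih =>
    cases c with
    | nil => simp at hl
    | cons y ys =>
      simp only [List.cons_append, List.forall₂_cons] at h
      simp only [List.length_cons, Nat.add_right_cancel_iff] at hl
      obtain ⟨hxy, h'⟩ := h
      obtain ⟨h1, h2⟩ := ih h' hl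
      exact ⟨.cons hxy h1, h2⟩

theorem forall₂_outs_split {X Y S Q : Type} (sim : Y → Y → Prop) (M : FSM X Y S)
    (MI : FSM X Y Q) (s : S) (q : Q) (a b : List X)
    (h : List.Forall₂ sim (M.outs s (a ++ b)) (MI.outs q (a ++ b))) :
    List.Forall₂ sim (M.outs s a) (MI.outs q a) ∧
    List.Forall₂ sim (M.outs (M.trs s a) b) (MI.outs (MI.trs q a) b) := by
  rw [FSM.outs_append, FSM.outs_append] at h
  exact forall₂_append_split h (by rw [FSM.outs_length, FSM.outs_length])

theorem forall₂_outs_append {X Y S Q : Type} (sim : Y → Y → Prop) (M : FSM X Y S)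
    (MI : FSM X Y Q) (s : S) (q : Q) (a b : List X)
    (ha : List.Forall₂ sim (M.outs s a) (MI.outs q a))
    (hb : List.Forall₂ sim (M.outs (M.trs s a) b) (MI.outs (MI.trs q a) b)) :
    List.Forall₂ sim (M.outs s (a ++ b)) (MI.outs q (a ++ b)) := by
  rw [FSM.outs_append, FSM.outs_append]
  exact List.rel_append ha hb

/-- Lemma 1: under the stated hypotheses, for `(v, x̄)` in
`D_ℓ ∪ DW_ℓ` with `ℓ` minimal and `x̄₁` a nonempty proper prefix of `x̄`, the
state of `M_I` reached by `v·x̄₁` differs from every state reached by `V`. -/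
theorem lemma1_not_reached_by_cover {X Y S Q : Type} [Fintype X] [Fintype S] [Fintype Q]
    (sim : Y → Y → Prop) (M : FSM X Y S) (MI : FSM X Y Q)
    (ω : S → S → List X)
    (hω : ∀ s₁ s₂ : S, s₁ ≠ s₂ →
      ω s₁ s₂ = ω s₂ s₁ ∧ StrongWitness sim M s₁ s₂ (ω s₁ s₂))
    (W : S → Set (List X))
    (hW : ∀ s₁ s₂ : S, s₁ ≠ s₂ →
      (∃ w ∈ W s₁, ω s₁ s₂ <+: w) ∧ (∃ w ∈ W s₂, ω s₁ s₂ <+: w))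
    (V : Set (List X)) (hV : StateCover M V)
    (hVW : ∀ v ∈ V, ∀ w ∈ W (M.trs M.init v),
      List.Forall₂ sim (M.outs M.init (v ++ w)) (MI.outs MI.init (v ++ w)))
    (hnc : ¬ Conforms sim MI M)
    (ℓ : ℕ) (hℓ : 1 ≤ ℓ)
    (hne : (DSet sim M MI V ℓ ∪ DWSet sim M MI V W ℓ).Nonempty)
    (hmin : ∀ ℓ' : ℕ, 1 ≤ ℓ' → ℓ' < ℓ →
      DSet sim M MI V ℓ' ∪ DWSet sim M MI V W ℓ' = ∅)
    (v xb : List X) (hmem : (v, xb) ∈ DSet sim M MI V ℓ ∪ DWSet sim M MI V W ℓ)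
    (xb₁ : List X) (h1 : xb₁ ≠ []) (h2 : xb₁ <+: xb) (h3 : xb₁ ≠ xb) :
    ∀ v' ∈ V, MI.trs MI.init (v ++ xb₁) ≠ MI.trs MI.init v' := by

  intro v' hv' heq
  obtain ⟨xb₂, rfl⟩ := h2
  have hx2ne : xb₂ ≠ [] := by rintro rfl; simp at h3
  -- basic data from hmem
  have hv : v ∈ V := by rcases hmem with h | h <;> exact h.1
  have hlen : xb₁.length + xb₂.length = ℓ := by
    rcases hmem with h | h <;> simpa using h.2.1
  have hk1 : 1 ≤ xb₁.length := List.length_pos_iff.mpr h1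
  have hk2 : 1 ≤ xb₂.length := List.length_pos_iff.mpr hx2ne
  have hkℓ : xb₁.length < ℓ := by omega
  set s₁ := M.trs M.init (v ++ xb₁) with hs₁
  set s₂ := M.trs M.init v' with hs₂
  set q := MI.trs MI.init (v ++ xb₁) with hq
  -- level xb₁.length is empty
  have hempty := hmin xb₁.length hk1 hkℓ
  have hnotD : (v, xb₁) ∉ DSet sim M MI V xb₁.length ∪ DWSet sim M MI V W xb₁.length := by
    rw [hempty]; exact Set.notMem_empty _
  have hsim1 : List.Forall₂ sim (M.outs M.init (v ++ xb₁)) (MI.outs MI.init (v ++ xb₁)) := by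
    by_contra hc
    exact hnotD (Or.inl ⟨hv, rfl, hc⟩)
  have hsimW : ∀ w ∈ W s₁, List.Forall₂ sim (M.outs M.init (v ++ xb₁ ++ w))
      (MI.outs MI.init (v ++ xb₁ ++ w)) := by
    intro w hw
    by_contra hc
    exact hnotD (Or.inr ⟨hv, rfl, w, hw, hc⟩)
  by_cases hss : s₁ = s₂
  · -- same state of M reached: shift the failure to (v', xb₂)
    have hempty2 := hmin xb₂.length hk2 (by omega)
    have hnot2 : (v', xb₂) ∉ DSet sim M MI V xb₂.length ∪ DWSet sim M MI V W xb₂.length := by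
      rw [hempty2]; exact Set.notMem_empty _
    rcases hmem with h | h
    · -- D case
      have hbad := h.2.2
      have htail : ¬ List.Forall₂ sim (M.outs s₁ xb₂) (MI.outs q xb₂) := by
        intro hc
        apply hbad
        rw [show v ++ (xb₁ ++ xb₂) = (v ++ xb₁) ++ xb₂ by simp]
        exact forall₂_outs_append sim M MI _ _ _ _ hsim1 hc
      apply hnot2
      left
      refine ⟨hv', rfl, fun hc => htail ?_⟩
      have := (forall₂_outs_split sim M MI _ _ v' xb₂ hc).2
      rwa [← hs₂, ← hss, ← heq] at this
    · -- DW case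
      obtain ⟨hvV, hlw, w, hw, hbad⟩ := h
      have hWset : M.trs M.init (v ++ (xb₁ ++ xb₂)) = M.trs M.init (v' ++ xb₂) := by
        rw [show v ++ (xb₁ ++ xb₂) = (v ++ xb₁) ++ xb₂ by simp,
          FSM.trs_append M M.init (v ++ xb₁) xb₂, FSM.trs_append M M.init v' xb₂,
          ← hs₁, ← hs₂, hss]
      have htail : ¬ List.Forall₂ sim (M.outs s₁ (xb₂ ++ w)) (MI.outs q (xb₂ ++ w)) := by
        intro hc
        apply hbad
        rw [show v ++ (xb₁ ++ xb₂) ++ w = (v ++ xb₁) ++ (xb₂ ++ w) by simp]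
        exact forall₂_outs_append sim M MI _ _ _ _ hsim1 hc
      apply hnot2
      right
      refine ⟨hv', rfl, w, hWset ▸ hw, fun hc => htail ?_⟩
      rw [show v' ++ xb₂ ++ w = v' ++ (xb₂ ++ w) by simp] at hc
      have := (forall₂_outs_split sim M MI _ _ v' (xb₂ ++ w) hc).2
      rwa [← hs₂, ← hss, ← heq] at this
  · -- distinct states: use strong witness
    obtain ⟨-, hwit⟩ := hω s₁ s₂ hss
    obtain ⟨⟨w₁, hw₁, hp₁⟩, ⟨w₂, hw₂, hp₂⟩⟩ := hW s₁ s₂ hss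
    rcases hwit Q MI q with hsep | hsep
    · -- ω separates s₁ from q, contradicting hsimW on w₁
      apply hsep
      have h1 := hsimW w₁ hw₁
      have h2 := (forall₂_outs_split sim M MI _ _ (v ++ xb₁) w₁ h1).2
      rw [← hs₁, ← hq] at h2
      obtain ⟨t, rfl⟩ := hp₁
      exact (forall₂_outs_split sim M MI _ _ _ t h2).1
    · -- ω separates s₂ from q, contradicting hVW on v', w₂
      apply hsep
      have h1 := hVW v' hv' w₂ (hs₂ ▸ hw₂)
      have h2 := (forall₂_outs_split sim M MI _ _ v' w₂ h1).2
      rw [← hs₂, ← heq] at h2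
      obtain ⟨t, rfl⟩ := hp₂
      exact (forall₂_outs_split sim M MI _ _ _ t h2).1
end

section
/- Let M be an FSM over input alphabet X and output alphabet Y, let ∼ be a similarity relation on Y, let s₁, s₂ be states of M, and let σ be an input sequence with δ(s₁, σ) ≠ δ(s₂, σ). If w is an input sequence with δ(s₁, σ) #ʷ_w δ(s₂, σ), then s₁ #ʷ_{σ·w} s₂, i.e., σ·w is a witness that s₁ and s₂ are strongly separable. -/

lemma FSM.outs_append_s15 {X Y S : Type} (M : FSM X Y S) (s : S) (xs ys : List X) :
    M.outs s (xs ++ ys) = M.outs s xs ++ M.outs (M.trs s xs) ys := by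
  induction xs generalizing s with
  | nil => simp [FSM.outs, FSM.trs]
  | cons x xs ih => simp [FSM.outs, FSM.trs, ih]

lemma forall2_append_right {α β : Type} {R : α → β → Prop} :
    ∀ {a : List α} {c : List β} {b : List α} {d : List β},
    List.Forall₂ R (a ++ b) (c ++ d) → a.length = c.length → List.Forall₂ R b d
  | [], [], _, _, h, _ => h
  | x :: a, y :: c, b, d, h, hl => by
    cases h with
    | cons _ h' => exact forall2_append_right h' (by simpa using hl)
  | [], _ :: _, _, _, _, hl => by simp at hl
  | _ :: _, [], _, _, _, hl => by simp at hl

lemma FSM.outs_length_s15 {X Y S : Type} (M : FSM X Y S) (s : S) (xs : List X) :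
    (M.outs s xs).length = xs.length := by
  induction xs generalizing s with
  | nil => rfl
  | cons x xs ih => simp [FSM.outs, ih]

/-- if `δ(s₁, σ) ≠ δ(s₂, σ)` and `w` witnesses that `δ(s₁, σ)`
and `δ(s₂, σ)` are strongly separable, then `σ·w` witnesses that `s₁` and `s₂`
are strongly separable. -/
theorem strongWitness_extend {X Y S : Type} [Fintype X] [Fintype S]
    (sim : Y → Y → Prop) (M : FSM X Y S) (s₁ s₂ : S) (σ w : List X)
    (hne : M.trs s₁ σ ≠ M.trs s₂ σ)
    (h : StrongWitness sim M (M.trs s₁ σ) (M.trs s₂ σ) w) :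
    StrongWitness sim M s₁ s₂ (σ ++ w) := by
  intro S' _ M' s₃
  rcases h S' M' (M'.trs s₃ σ) with h1 | h1
  · left
    intro hf
    rw [FSM.outs_append_s15, FSM.outs_append_s15] at hf
    exact h1 (forall2_append_right hf (by simp [FSM.outs_length_s15]))
  · right
    intro hf
    rw [FSM.outs_append_s15, FSM.outs_append_s15] at hf
    exact h1 (forall2_append_right hf (by simp [FSM.outs_length_s15]))
end
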